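/- arXiv:2604.20031 — 5 statements merged into one kernel-verified Lean document; each statement's English description precedes it below -/
import Mathlib

section
/- Diameter-Lipschitzness of ξ_S(c − 2ĉ) − z⋆_S(c) in c: let S ⊆ ℝ^d be nonempty and compact with diameter D(S). Then for all c₁, c₂, ĉ ∈ ℝ^d, |(ξ_S(c₁ − 2ĉ) − z⋆_S(c₁)) − (ξ_S(c₂ − 2ĉ) − z⋆_S(c₂))| ≤ D(S) · ‖c₁ − c₂‖. -/
open scoped RealInnerProductSpace

/-- Support function of a set `S ⊆ ℝ^d`. -/
noncomputable def supp {d : ℕ} (S : Set (EuclideanSpace ℝ (Fin d)))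
    (u : EuclideanSpace ℝ (Fin d)) : ℝ :=
  sSup ((fun w => ⟪u, w⟫) '' S)

/-- Optimal value of the linear program over `S`. -/
noncomputable def zstar {d : ℕ} (S : Set (EuclideanSpace ℝ (Fin d)))
    (c : EuclideanSpace ℝ (Fin d)) : ℝ :=
  sInf ((fun w => ⟪c, w⟫) '' S)

/-!
For `w, v ∈ S`, the quantity `⟪c - x, w⟫ - ⟪c, v⟫` changes by `⟪c₁ - c₂, w - v⟫ ≤ D(S) ‖c₁ - c₂‖`
when `c₂` is replaced by `c₁`. Taking the supremum over `w` and the infimum over `v` shows that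
`c ↦ ξ_S(c - x) - z⋆_S(c)` is `D(S)`-Lipschitz for every shift `x`.
-/

open Bornology Metric

theorem isBounded_image_inner {E : Type*} [NormedAddCommGroup E] [InnerProductSpace ℝ E]
    {s : Set E} (hs : IsBounded s) (u : E) : IsBounded ((fun w => ⟪u, w⟫) '' s) :=
  (innerSL ℝ u).lipschitz.isBounded_image hs

section

variable {d : ℕ} {S : Set (EuclideanSpace ℝ (Fin d))}

theorem inner_le_supp (hS : IsBounded S) {w : EuclideanSpace ℝ (Fin d)} (hw : w ∈ S)
    (u : EuclideanSpace ℝ (Fin d)) : ⟪u, w⟫ ≤ supp S u :=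
  le_csSup (isBounded_image_inner hS u).bddAbove (Set.mem_image_of_mem _ hw)

theorem zstar_le_inner (hS : IsBounded S) {v : EuclideanSpace ℝ (Fin d)} (hv : v ∈ S)
    (c : EuclideanSpace ℝ (Fin d)) : zstar S c ≤ ⟪c, v⟫ :=
  csInf_le (isBounded_image_inner hS c).bddBelow (Set.mem_image_of_mem _ hv)

theorem supp_le_of_forall_inner_le (hne : S.Nonempty) {u : EuclideanSpace ℝ (Fin d)} {a : ℝ}
    (h : ∀ w ∈ S, ⟪u, w⟫ ≤ a) : supp S u ≤ a :=
  csSup_le (hne.image _) (Set.forall_mem_image.2 h)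

theorem le_zstar_of_forall_le_inner (hne : S.Nonempty) {c : EuclideanSpace ℝ (Fin d)} {a : ℝ}
    (h : ∀ v ∈ S, a ≤ ⟪c, v⟫) : a ≤ zstar S c :=
  le_csInf (hne.image _) (Set.forall_mem_image.2 h)

theorem supp_sub_zstar_le (hne : S.Nonempty) (hS : IsBounded S)
    (x c₁ c₂ : EuclideanSpace ℝ (Fin d)) :
    supp S (c₁ - x) - zstar S c₁ ≤
      supp S (c₂ - x) - zstar S c₂ + diam S * dist c₁ c₂ := by
  have hpair : ∀ w ∈ S, ∀ v ∈ S, ⟪c₁ - x, w⟫ - ⟪c₁, v⟫ ≤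
      supp S (c₂ - x) - zstar S c₂ + diam S * dist c₁ c₂ := by
    intro w hw v hv
    have hshift : ⟪c₁ - x, w⟫ - ⟪c₁, v⟫ =
        ⟪c₂ - x, w⟫ - ⟪c₂, v⟫ + ⟪c₁ - c₂, w - v⟫ := by
      simp only [inner_sub_left, inner_sub_right]
      ring
    have hcross : ⟪c₁ - c₂, w - v⟫ ≤ diam S * dist c₁ c₂ :=
      calc ⟪c₁ - c₂, w - v⟫ ≤ ‖c₁ - c₂‖ * ‖w - v‖ := real_inner_le_norm _ _
        _ = dist w v * dist c₁ c₂ := by rw [dist_eq_norm, dist_eq_norm, mul_comm]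
        _ ≤ diam S * dist c₁ c₂ := by
          gcongr
          exact dist_le_diam_of_mem hS hw hv
    rw [hshift]
    linarith [inner_le_supp hS hw (c₂ - x), zstar_le_inner hS hv c₂]
  refine sub_le_iff_le_add.2 (supp_le_of_forall_inner_le hne fun w hw => ?_)
  rw [← sub_le_iff_le_add']
  exact le_zstar_of_forall_le_inner hne fun v hv => by linarith [hpair w hw v hv]

theorem lipschitzWith_supp_sub_zstar (hne : S.Nonempty) (hS : IsBounded S)
    (x : EuclideanSpace ℝ (Fin d)) :
    LipschitzWith ⟨diam S, diam_nonneg⟩ fun c => supp S (c - x) - zstar S c :=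
  LipschitzWith.of_le_add_mul _ (supp_sub_zstar_le hne hS x)

end

/-- **Diameter-Lipschitzness of `ξ_S(c − 2ĉ) − z⋆_S(c)` in `c`.**
For a nonempty compact `S ⊆ ℝ^d` with diameter `D(S)`, for all `c₁, c₂, ĉ`,
`|(ξ_S(c₁ − 2ĉ) − z⋆_S(c₁)) − (ξ_S(c₂ − 2ĉ) − z⋆_S(c₂))| ≤ D(S) ‖c₁ − c₂‖`. -/
theorem diameter_lipschitz_support_minus_zstar {d : ℕ}
    (S : Set (EuclideanSpace ℝ (Fin d)))
    (hne : S.Nonempty) (hcomp : IsCompact S)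
    (c₁ c₂ chat : EuclideanSpace ℝ (Fin d)) :
    |(supp S (c₁ - (2 : ℝ) • chat) - zstar S c₁) -
      (supp S (c₂ - (2 : ℝ) • chat) - zstar S c₂)| ≤
      Metric.diam S * ‖c₁ - c₂‖ := by
  have h := (lipschitzWith_supp_sub_zstar hne hcomp.isBounded ((2 : ℝ) • chat)).dist_le_mul c₁ c₂
  rwa [Real.dist_eq, dist_eq_norm] at h
end

section
/- SPO+ loss discrepancy under objective and feasible-set shift: let S_ref, S_cl ⊆ ℝ^d be nonempty compact sets and c_ref, c_cl, ĉ ∈ ℝ^d. Let w⋆_ref ∈ S_ref be a minimizer of w ↦ ⟨c_ref, w⟩ over S_ref and w⋆_cl ∈ S_cl a minimizer of w ↦ ⟨c_cl, w⟩ over S_cl. Define c_d = ‖c_ref − c_cl‖, the shape distance δ_N = inf_{v∈ℝ^d} d_H(S_ref, S_cl + v), D_ref = D(S_ref), D_cl = D(S_cl), D_min = min{D_ref, D_cl}, and H(ĉ) = 2‖ĉ‖(δ_N + D_min) + min{ D_ref·c_d + δ_N(‖c_cl − 2ĉ‖ + ‖c_cl‖), D_cl·c_d + δ_N(‖c_ref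 − 2ĉ‖ + ‖c_ref‖) }. Then |ℓ_{S_ref}(ĉ, c_ref) − ℓ_{S_cl}(ĉ, c_cl)| ≤ H(ĉ), where the losses are computed with the minimizers w⋆_ref and w⋆_cl respectively. -/
open scoped RealInnerProductSpace

/-- SPO+ loss with a chosen minimizer `w⋆` of `⟨c, ·⟩` over `S`. -/
noncomputable def spoPlus {d : ℕ} (S : Set (EuclideanSpace ℝ (Fin d)))
    (chat c wstar : EuclideanSpace ℝ (Fin d)) : ℝ :=
  supp S (c - (2 : ℝ) • chat) + 2 * ⟪chat, wstar⟫ - zstar S c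

/-- The translate `S + v = {w + v : w ∈ S}`. -/
def setTranslate {d : ℕ} (S : Set (EuclideanSpace ℝ (Fin d)))
    (v : EuclideanSpace ℝ (Fin d)) : Set (EuclideanSpace ℝ (Fin d)) :=
  (fun w => w + v) '' S

/-- Translation-invariant shape distance `δ_N = inf_v d_H(S₁, S₂ + v)`. -/
noncomputable def shapeDist {d : ℕ}
    (S₁ S₂ : Set (EuclideanSpace ℝ (Fin d))) : ℝ :=
  ⨅ v : EuclideanSpace ℝ (Fin d), Metric.hausdorffDist S₁ (setTranslate S₂ v)

/-!
Write `ℓ_S(ĉ, c) = g_S(c) + 2⟪ĉ, w⋆⟫`, where `g_S(c) = ξ_S(c - 2ĉ) + ξ_S(-c)` (`spoPlusCore`)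
does not depend on `w⋆`. Support functions are `‖u‖`-Lipschitz in `S` for the Hausdorff distance
and `g_S` is `D(S)`-Lipschitz in `c`, so going from `(S_ref, c_ref)` to `(S_cl, c_cl)` through
either `(S_ref, c_cl)` or `(S_cl, c_ref)` bounds the difference of the `g`-terms, while any two
points of `S_ref` and `S_cl` are within `d_H + D_min` of each other. Translating `S` together with
`w⋆` leaves the loss unchanged, and the bound is monotone and continuous in `d_H`, so it passes to
the infimum over translates.
-/

open Metric Bornology

section HausdorffDist

variable {α : Type*} [PseudoMetricSpace α] {A B : Set α} {x y : α}

theorem exists_dist_le_hausdorffDist (hA : IsBounded A) (hB : IsCompact B) (hBne : B.Nonempty)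
    (hx : x ∈ A) : ∃ b ∈ B, dist x b ≤ hausdorffDist A B := by
  obtain ⟨b, hb, hxb⟩ := hB.exists_infDist_eq_dist hBne x
  refine ⟨b, hb, hxb ▸ infDist_le_hausdorffDist_of_mem hx ?_⟩
  exact hausdorffEDist_ne_top_of_nonempty_of_bounded ⟨x, hx⟩ hBne hA hB.isBounded

theorem dist_le_hausdorffDist_add_diam (hA : IsBounded A) (hB : IsCompact B) (hx : x ∈ A)
    (hy : y ∈ B) : dist x y ≤ hausdorffDist A B + diam B := by
  obtain ⟨b, hb, hxb⟩ := exists_dist_le_hausdorffDist hA hB ⟨y, hy⟩ hx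
  calc dist x y ≤ dist x b + dist b y := dist_triangle x b y
    _ ≤ hausdorffDist A B + diam B := add_le_add hxb (dist_le_diam_of_mem hB.isBounded hb hy)

theorem dist_le_hausdorffDist_add_min_diam (hA : IsCompact A) (hB : IsCompact B) (hx : x ∈ A)
    (hy : y ∈ B) : dist x y ≤ hausdorffDist A B + min (diam A) (diam B) := by
  rw [← min_add_add_left]
  refine le_min ?_ (dist_le_hausdorffDist_add_diam hA.isBounded hB hx hy)
  rw [dist_comm, hausdorffDist_comm]
  exact dist_le_hausdorffDist_add_diam hB.isBounded hA hy hx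

end HausdorffDist

section SupportFunction

variable {d : ℕ} {S A B : Set (EuclideanSpace ℝ (Fin d))} {u x : EuclideanSpace ℝ (Fin d)}

theorem le_supp (hS : IsCompact S) (hx : x ∈ S) (u : EuclideanSpace ℝ (Fin d)) :
    ⟪u, x⟫ ≤ supp S u :=
  le_csSup (hS.image (by fun_prop : Continuous fun w => ⟪u, w⟫)).bddAbove ⟨x, hx, rfl⟩

theorem supp_le {a : ℝ} (hS : S.Nonempty) (h : ∀ x ∈ S, ⟪u, x⟫ ≤ a) : supp S u ≤ a :=
  csSup_le (hS.image _) (by rintro _ ⟨x, hx, rfl⟩; exact h x hx)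

theorem exists_supp_eq_inner (hSne : S.Nonempty) (hS : IsCompact S)
    (u : EuclideanSpace ℝ (Fin d)) : ∃ w ∈ S, supp S u = ⟪u, w⟫ := by
  obtain ⟨w, hw, h⟩ :=
    (hS.image (by fun_prop : Continuous fun w => ⟪u, w⟫)).sSup_mem (hSne.image _)
  exact ⟨w, hw, h.symm⟩

theorem zstar_eq_neg_supp_neg (S : Set (EuclideanSpace ℝ (Fin d)))
    (c : EuclideanSpace ℝ (Fin d)) :
    zstar S c = -supp S (-c) := by
  unfold zstar supp
  rw [Real.sInf_def]
  congr 2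
  ext r
  simp [inner_neg_left, neg_eq_iff_eq_neg]

theorem supp_le_supp_add_norm_mul_hausdorffDist (hAne : A.Nonempty) (hBne : B.Nonempty)
    (hA : IsCompact A) (hB : IsCompact B) (u : EuclideanSpace ℝ (Fin d)) :
    supp A u ≤ supp B u + ‖u‖ * hausdorffDist A B := by
  refine supp_le hAne fun x hx => ?_
  obtain ⟨b, hb, hxb⟩ := exists_dist_le_hausdorffDist hA.isBounded hB hBne hx
  calc ⟪u, x⟫ = ⟪u, b⟫ + ⟪u, x - b⟫ := by rw [inner_sub_right]; ring
    _ ≤ supp B u + ‖u‖ * dist x b := by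
      rw [dist_eq_norm]; exact add_le_add (le_supp hB hb u) (real_inner_le_norm u (x - b))
    _ ≤ supp B u + ‖u‖ * hausdorffDist A B := by gcongr

theorem abs_supp_sub_supp_le (hAne : A.Nonempty) (hBne : B.Nonempty) (hA : IsCompact A)
    (hB : IsCompact B) (u : EuclideanSpace ℝ (Fin d)) :
    |supp A u - supp B u| ≤ ‖u‖ * hausdorffDist A B := by
  have hAB := supp_le_supp_add_norm_mul_hausdorffDist hAne hBne hA hB u
  have hBA := supp_le_supp_add_norm_mul_hausdorffDist hBne hAne hB hA u
  rw [hausdorffDist_comm] at hBA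
  exact abs_sub_le_iff.2 ⟨by linarith, by linarith⟩

theorem abs_zstar_sub_zstar_le (hAne : A.Nonempty) (hBne : B.Nonempty) (hA : IsCompact A)
    (hB : IsCompact B) (c : EuclideanSpace ℝ (Fin d)) :
    |zstar A c - zstar B c| ≤ ‖c‖ * hausdorffDist A B := by
  rw [zstar_eq_neg_supp_neg, zstar_eq_neg_supp_neg, neg_sub_neg, abs_sub_comm, ← norm_neg c]
  exact abs_supp_sub_supp_le hAne hBne hA hB (-c)

end SupportFunction

section SPOPlus

variable {d : ℕ} {S A B : Set (EuclideanSpace ℝ (Fin d))}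

noncomputable def spoPlusCore (S : Set (EuclideanSpace ℝ (Fin d)))
    (chat c : EuclideanSpace ℝ (Fin d)) : ℝ :=
  supp S (c - (2 : ℝ) • chat) - zstar S c

theorem spoPlus_eq_spoPlusCore_add (S : Set (EuclideanSpace ℝ (Fin d)))
    (chat c wstar : EuclideanSpace ℝ (Fin d)) :
    spoPlus S chat c wstar = spoPlusCore S chat c + 2 * ⟪chat, wstar⟫ := by
  unfold spoPlus spoPlusCore; ring

theorem spoPlusCore_sub_spoPlusCore_le (hSne : S.Nonempty) (hS : IsCompact S)
    (chat c c' : EuclideanSpace ℝ (Fin d)) :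
    spoPlusCore S chat c - spoPlusCore S chat c' ≤ diam S * ‖c - c'‖ := by
  obtain ⟨w₁, hw₁, h₁⟩ := exists_supp_eq_inner hSne hS (c - (2 : ℝ) • chat)
  obtain ⟨w₂, hw₂, h₂⟩ := exists_supp_eq_inner hSne hS (-c)
  have h₁' := le_supp hS hw₁ (c' - (2 : ℝ) • chat)
  have h₂' := le_supp hS hw₂ (-c')
  have hw : ⟪c - c', w₁ - w₂⟫ ≤ diam S * ‖c - c'‖ := calc
    ⟪c - c', w₁ - w₂⟫ ≤ ‖c - c'‖ * dist w₁ w₂ := dist_eq_norm w₁ w₂ ▸ real_inner_le_norm _ _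
    _ ≤ diam S * ‖c - c'‖ := by
      rw [mul_comm]; gcongr; exact dist_le_diam_of_mem hS.isBounded hw₁ hw₂
  simp only [spoPlusCore, zstar_eq_neg_supp_neg, h₁, h₂, inner_sub_left, inner_sub_right,
    inner_neg_left] at hw h₁' h₂' ⊢
  linarith

theorem abs_spoPlusCore_sub_spoPlusCore_le_diam (hSne : S.Nonempty) (hS : IsCompact S)
    (chat c c' : EuclideanSpace ℝ (Fin d)) :
    |spoPlusCore S chat c - spoPlusCore S chat c'| ≤ diam S * ‖c - c'‖ :=
  abs_sub_le_iff.2 ⟨spoPlusCore_sub_spoPlusCore_le hSne hS chat c c',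
    norm_sub_rev c c' ▸ spoPlusCore_sub_spoPlusCore_le hSne hS chat c' c⟩

theorem abs_spoPlusCore_sub_spoPlusCore_le_hausdorffDist (hAne : A.Nonempty)
    (hBne : B.Nonempty) (hA : IsCompact A) (hB : IsCompact B) (chat c : EuclideanSpace ℝ (Fin d)) :
    |spoPlusCore A chat c - spoPlusCore B chat c| ≤
      hausdorffDist A B * (‖c - (2 : ℝ) • chat‖ + ‖c‖) := by
  have hsupp := abs_supp_sub_supp_le hAne hBne hA hB (c - (2 : ℝ) • chat)
  have hzstar := abs_zstar_sub_zstar_le hAne hBne hA hB c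
  calc |spoPlusCore A chat c - spoPlusCore B chat c|
      = |(supp A (c - (2 : ℝ) • chat) - supp B (c - (2 : ℝ) • chat)) -
          (zstar A c - zstar B c)| := by unfold spoPlusCore; ring_nf
    _ ≤ _ := (abs_sub _ _).trans (by linarith)

theorem abs_spoPlus_sub_spoPlus_le {wA wB : EuclideanSpace ℝ (Fin d)} (hA : IsCompact A)
    (hB : IsCompact B) (hwA : wA ∈ A) (hwB : wB ∈ B) (chat c c' : EuclideanSpace ℝ (Fin d)) :
    |spoPlus A chat c wA - spoPlus B chat c' wB| ≤
      2 * ‖chat‖ * (hausdorffDist A B + min (diam A) (diam B)) +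
      min (diam A * ‖c - c'‖ + hausdorffDist A B * (‖c' - (2 : ℝ) • chat‖ + ‖c'‖))
        (diam B * ‖c - c'‖ + hausdorffDist A B * (‖c - (2 : ℝ) • chat‖ + ‖c‖)) := by
  have hAne : A.Nonempty := ⟨wA, hwA⟩
  have hBne : B.Nonempty := ⟨wB, hwB⟩
  have hmin : |2 * ⟪chat, wA - wB⟫| ≤
      2 * ‖chat‖ * (hausdorffDist A B + min (diam A) (diam B)) := calc
    |2 * ⟪chat, wA - wB⟫| ≤ 2 * (‖chat‖ * dist wA wB) := by
      rw [abs_mul, abs_two, dist_eq_norm]; gcongr; exact abs_real_inner_le_norm _ _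
    _ ≤ _ := by
      rw [mul_assoc]; gcongr; exact dist_le_hausdorffDist_add_min_diam hA hB hwA hwB
  have hcore : |spoPlusCore A chat c - spoPlusCore B chat c'| ≤
      min (diam A * ‖c - c'‖ + hausdorffDist A B * (‖c' - (2 : ℝ) • chat‖ + ‖c'‖))
        (diam B * ‖c - c'‖ + hausdorffDist A B * (‖c - (2 : ℝ) • chat‖ + ‖c‖)) :=
    le_min ((abs_sub_le _ (spoPlusCore A chat c') _).trans (add_le_add
        (abs_spoPlusCore_sub_spoPlusCore_le_diam hAne hA chat c c')
        (abs_spoPlusCore_sub_spoPlusCore_le_hausdorffDist hAne hBne hA hB chat c')))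
      ((abs_sub_le _ (spoPlusCore B chat c) _).trans ((add_le_add
        (abs_spoPlusCore_sub_spoPlusCore_le_hausdorffDist hAne hBne hA hB chat c)
        (abs_spoPlusCore_sub_spoPlusCore_le_diam hBne hB chat c c')).trans_eq (add_comm _ _)))
  calc |spoPlus A chat c wA - spoPlus B chat c' wB|
      = |2 * ⟪chat, wA - wB⟫ + (spoPlusCore A chat c - spoPlusCore B chat c')| := by
        rw [spoPlus_eq_spoPlusCore_add, spoPlus_eq_spoPlusCore_add, inner_sub_right]; ring_nf
    _ ≤ _ := (abs_add_le _ _).trans (add_le_add hmin hcore)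

end SPOPlus

section Translate

variable {d : ℕ} {S : Set (EuclideanSpace ℝ (Fin d))}

theorem mem_setTranslate {w : EuclideanSpace ℝ (Fin d)} (hw : w ∈ S)
    (v : EuclideanSpace ℝ (Fin d)) :
    w + v ∈ setTranslate S v :=
  Set.mem_image_of_mem _ hw

theorem IsCompact.setTranslate (hS : IsCompact S) (v : EuclideanSpace ℝ (Fin d)) :
    IsCompact (setTranslate S v) :=
  hS.image (continuous_add_const v)

theorem diam_setTranslate (S : Set (EuclideanSpace ℝ (Fin d))) (v : EuclideanSpace ℝ (Fin d)) :
    diam (setTranslate S v) = diam S :=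
  (isometry_add_right v).diam_image S

theorem supp_setTranslate (hSne : S.Nonempty) (hS : IsCompact S)
    (u v : EuclideanSpace ℝ (Fin d)) :
    supp (setTranslate S v) u = supp S u + ⟪u, v⟫ := by
  have hmono : Monotone (· + ⟪u, v⟫) := fun _ _ h => add_le_add_left h _
  unfold supp setTranslate
  rw [hmono.map_csSup_of_continuousAt (continuous_add_const _).continuousAt (hSne.image _)
    (hS.image (by fun_prop : Continuous fun w => ⟪u, w⟫)).bddAbove, Set.image_image,
    Set.image_image]
  simp only [inner_add_right]

theorem spoPlus_setTranslate (hSne : S.Nonempty) (hS : IsCompact S)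
    (chat c w v : EuclideanSpace ℝ (Fin d)) :
    spoPlus (setTranslate S v) chat c (w + v) = spoPlus S chat c w := by
  simp only [spoPlus, zstar_eq_neg_supp_neg, supp_setTranslate hSne hS, inner_add_right,
    inner_sub_left, inner_neg_left, real_inner_smul_left]
  ring

end Translate

theorem spoPlus_heterogeneity_bound_general {d : ℕ}
    (Sref Scl : Set (EuclideanSpace ℝ (Fin d)))
    (hcompref : IsCompact Sref) (hcompcl : IsCompact Scl)
    (cref ccl chat : EuclideanSpace ℝ (Fin d))
    (wref : EuclideanSpace ℝ (Fin d)) (hwrefmem : wref ∈ Sref)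
    (wcl : EuclideanSpace ℝ (Fin d)) (hwclmem : wcl ∈ Scl) :
    |spoPlus Sref chat cref wref - spoPlus Scl chat ccl wcl| ≤
      2 * ‖chat‖ * (shapeDist Sref Scl + min (Metric.diam Sref) (Metric.diam Scl)) +
      min
        (Metric.diam Sref * ‖cref - ccl‖ +
          shapeDist Sref Scl * (‖ccl - (2 : ℝ) • chat‖ + ‖ccl‖))
        (Metric.diam Scl * ‖cref - ccl‖ +
          shapeDist Sref Scl * (‖cref - (2 : ℝ) • chat‖ + ‖cref‖)) := by
  set F : ℝ → ℝ := fun δ => 2 * ‖chat‖ * (δ + min (diam Sref) (diam Scl)) +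
    min (diam Sref * ‖cref - ccl‖ + δ * (‖ccl - (2 : ℝ) • chat‖ + ‖ccl‖))
      (diam Scl * ‖cref - ccl‖ + δ * (‖cref - (2 : ℝ) • chat‖ + ‖cref‖))
  have hF_mono : Monotone F := fun _ _ h => by simp only [F]; gcongr
  have hF_cont : Continuous F := by fun_prop
  change _ ≤ F (shapeDist Sref Scl)
  rw [shapeDist, hF_mono.map_ciInf_of_continuousAt hF_cont.continuousAt
    ⟨0, by rintro _ ⟨v, rfl⟩; exact hausdorffDist_nonneg⟩]
  refine le_ciInf fun v => ?_
  have h := abs_spoPlus_sub_spoPlus_le hcompref (hcompcl.setTranslate v) hwrefmem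
    (mem_setTranslate hwclmem v) chat cref ccl
  rwa [spoPlus_setTranslate ⟨wcl, hwclmem⟩ hcompcl, diam_setTranslate] at h

/-- **SPO+ loss discrepancy under objective and feasible-set shift (Theorem 1).** -/
theorem spoPlus_heterogeneity_bound {d : ℕ}
    (Sref Scl : Set (EuclideanSpace ℝ (Fin d)))
    (hneref : Sref.Nonempty) (hnecl : Scl.Nonempty)
    (hcompref : IsCompact Sref) (hcompcl : IsCompact Scl)
    (cref ccl chat : EuclideanSpace ℝ (Fin d))
    (wref : EuclideanSpace ℝ (Fin d)) (hwrefmem : wref ∈ Sref)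
    (hwrefmin : ∀ w ∈ Sref, ⟪cref, wref⟫ ≤ ⟪cref, w⟫)
    (wcl : EuclideanSpace ℝ (Fin d)) (hwclmem : wcl ∈ Scl)
    (hwclmin : ∀ w ∈ Scl, ⟪ccl, wcl⟫ ≤ ⟪ccl, w⟫) :
    |spoPlus Sref chat cref wref - spoPlus Scl chat ccl wcl| ≤
      2 * ‖chat‖ * (shapeDist Sref Scl + min (Metric.diam Sref) (Metric.diam Scl)) +
      min
        (Metric.diam Sref * ‖cref - ccl‖ +
          shapeDist Sref Scl * (‖ccl - (2 : ℝ) • chat‖ + ‖ccl‖))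
        (Metric.diam Scl * ‖cref - ccl‖ +
          shapeDist Sref Scl * (‖cref - (2 : ℝ) • chat‖ + ‖cref‖)) :=
  spoPlus_heterogeneity_bound_general Sref Scl hcompref hcompcl cref ccl chat wref hwrefmem wcl
    hwclmem
end

section
/- Directional stability of support points under strong convexity: let S ⊆ ℝ^d be nonempty, compact, and ρ-strongly convex. Then for every pair of unit vectors p, q ∈ ℝ^d and every x_p ∈ S attaining max_{x∈S} ⟨p, x⟩ and every x_q ∈ S attaining max_{x∈S} ⟨q, x⟩, one has ‖x_p − x_q‖ ≤ ρ‖p − q‖ (in particular, taking p = q shows the maximizer is unique). Consequently, for any c₁, c₂ ∈ ℝ^d with c₁ ≠ 0 and c₂ ≠ 0, and any minimizers w₁ of ⟨c₁, ·⟩ and w₂ of ⟨c₂, ·⟩ over S, ‖w₁ − w₂‖ ≤ ρ‖c₁/‖c₁‖ − c₂/‖c₂‖‖. -/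
open scoped RealInnerProductSpace

/-- A set is `ρ`-strongly convex if it is an intersection of closed balls of radius `ρ`. -/
def StronglyConvexSet {d : ℕ} (ρ : ℝ) (S : Set (EuclideanSpace ℝ (Fin d))) : Prop :=
  ∃ X : Set (EuclideanSpace ℝ (Fin d)), S = ⋂ x ∈ X, Metric.closedBall x ρ

/-!
If `y` and `z` lie in a closed ball of radius `ρ`, then so does `a • y + b • z` (with `a + b = 1`)
pushed in any unit direction by `a b ‖y - z‖² / (2ρ)`: the parallelogram law leaves exactly that
much room. A `ρ`-strongly convex set therefore contains these pushed points. Pushing towards `p`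
from a maximizer `xp` of `⟪p, ·⟫` and letting `a → 0` gives `‖y - xp‖² ≤ 2ρ ⟪p, xp - y⟫` on `S`,
i.e. `S` lies in the ball of radius `ρ` around `xp - ρ p`. Adding this inequality for `xp` and for
`xq` and applying Cauchy–Schwarz yields `‖xp - xq‖² ≤ ρ ⟪p - q, xp - xq⟫ ≤ ρ ‖p - q‖ ‖xp - xq‖`.
-/

open Filter Topology

section InnerProductSpace

variable {E : Type*} [NormedAddCommGroup E] [InnerProductSpace ℝ E]

lemma norm_smul_add_smul_sq_of_add_eq_one {a b : ℝ} (hab : a + b = 1) (x y : E) :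
    ‖a • x + b • y‖ ^ 2 = a * ‖x‖ ^ 2 + b * ‖y‖ ^ 2 - a * b * ‖x - y‖ ^ 2 := by
  rw [norm_add_sq_real, norm_sub_sq_real, norm_smul, norm_smul, real_inner_smul_left,
    real_inner_smul_right, mul_pow, mul_pow, Real.norm_eq_abs, Real.norm_eq_abs, sq_abs, sq_abs]
  obtain rfl := eq_sub_of_add_eq hab
  ring

lemma smul_add_smul_add_smul_mem_closedBall {ρ a b : ℝ} (hρ : 0 < ρ) (ha : 0 ≤ a) (hb : 0 ≤ b)
    (hab : a + b = 1) {c y z u : E} (hy : y ∈ Metric.closedBall c ρ)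
    (hz : z ∈ Metric.closedBall c ρ) (hu : ‖u‖ ≤ 1) :
    a • y + b • z + (a * b * ‖y - z‖ ^ 2 / (2 * ρ)) • u ∈ Metric.closedBall c ρ := by
  rw [Metric.mem_closedBall, dist_eq_norm] at hy hz ⊢
  set t := a * b * ‖y - z‖ ^ 2 / (2 * ρ)
  set w := a • (y - c) + b • (z - c)
  have ht : 0 ≤ t := by positivity
  have hw_sq : ‖w‖ ^ 2 ≤ ρ ^ 2 - 2 * ρ * t := by
    have hyz : (y - c) - (z - c) = y - z := sub_sub_sub_cancel_right y z c
    have h2ρt : 2 * ρ * t = a * b * ‖y - z‖ ^ 2 := by unfold t; field_simp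
    rw [norm_smul_add_smul_sq_of_add_eq_one hab, hyz, h2ρt]
    have hy2 : ‖y - c‖ ^ 2 ≤ ρ ^ 2 := pow_le_pow_left₀ (norm_nonneg _) hy 2
    have hz2 : ‖z - c‖ ^ 2 ≤ ρ ^ 2 := pow_le_pow_left₀ (norm_nonneg _) hz 2
    nlinarith [mul_le_mul_of_nonneg_left hy2 ha, mul_le_mul_of_nonneg_left hz2 hb]
  have hw : ‖w‖ ≤ ρ - t :=
    le_of_sq_le_sq (by nlinarith) (by nlinarith [sq_nonneg ‖w‖])
  have hsplit : a • y + b • z + t • u - c = w + t • u := by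
    unfold w; rw [eq_sub_of_add_eq hab]; module
  calc ‖a • y + b • z + t • u - c‖ = ‖w + t • u‖ := by rw [hsplit]
    _ ≤ ‖w‖ + ‖t • u‖ := norm_add_le _ _
    _ = ‖w‖ + t * ‖u‖ := by rw [norm_smul, Real.norm_of_nonneg ht]
    _ ≤ ρ := by nlinarith

variable {S X : Set E} {ρ : ℝ}

lemma norm_sub_sq_le_of_forall_inner_le (hS : S = ⋂ c ∈ X, Metric.closedBall c ρ) (hρ : 0 < ρ)
    {p xp y : E} (hp : ‖p‖ = 1) (hxp : xp ∈ S) (hmax : ∀ x ∈ S, ⟪p, x⟫ ≤ ⟪p, xp⟫) (hy : y ∈ S) :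
    ‖y - xp‖ ^ 2 ≤ 2 * ρ * ⟪p, xp - y⟫ := by
  set M := ‖y - xp‖ ^ 2 / (2 * ρ)
  have hpush : ∀ l ∈ Set.Ioc (0 : ℝ) 1, ⟪p, y - xp⟫ + (1 - l) * M ≤ 0 := by
    rintro l ⟨hl0, hl1⟩
    have hmem : l • y + (1 - l) • xp + (l * (1 - l) * ‖y - xp‖ ^ 2 / (2 * ρ)) • p ∈ S := by
      simp only [hS, Set.mem_iInter] at hy hxp ⊢
      exact fun c hc => smul_add_smul_add_smul_mem_closedBall hρ hl0.le (by linarith)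
        (add_sub_cancel l 1) (hy c hc) (hxp c hc) hp.le
    have h := hmax _ hmem
    simp only [inner_add_right, inner_smul_right, real_inner_self_eq_norm_sq, hp,
      inner_sub_right] at h ⊢
    have : l * (⟪p, y⟫ - ⟪p, xp⟫ + (1 - l) * M) ≤ 0 := by unfold M; linear_combination h
    exact nonpos_of_mul_nonpos_right this hl0
  have hlim : ⟪p, y - xp⟫ + M ≤ 0 := by
    have hcont : Tendsto (fun l : ℝ => ⟪p, y - xp⟫ + (1 - l) * M) (𝓝[>] 0)
        (𝓝 (⟪p, y - xp⟫ + M)) :=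
      tendsto_nhdsWithin_of_tendsto_nhds <| Continuous.tendsto' (by fun_prop) _ _ (by simp)
    exact le_of_tendsto hcont (eventually_of_mem (Ioc_mem_nhdsGT one_pos) hpush)
  have hrev : ⟪p, xp - y⟫ = -⟪p, y - xp⟫ := by rw [← inner_neg_right, neg_sub]
  have : ‖y - xp‖ ^ 2 = 2 * ρ * M := by unfold M; field_simp
  rw [this, hrev]
  nlinarith

lemma norm_sub_le_mul_norm_sub_of_forall_inner_le (hS : S = ⋂ c ∈ X, Metric.closedBall c ρ)
    (hρ : 0 < ρ) {p q xp xq : E} (hp : ‖p‖ = 1) (hq : ‖q‖ = 1)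
    (hxp : xp ∈ S) (hmaxp : ∀ x ∈ S, ⟪p, x⟫ ≤ ⟪p, xp⟫)
    (hxq : xq ∈ S) (hmaxq : ∀ x ∈ S, ⟪q, x⟫ ≤ ⟪q, xq⟫) :
    ‖xp - xq‖ ≤ ρ * ‖p - q‖ := by
  have h₁ := norm_sub_sq_le_of_forall_inner_le hS hρ hp hxp hmaxp hxq
  have h₂ := norm_sub_sq_le_of_forall_inner_le hS hρ hq hxq hmaxq hxp
  rw [norm_sub_rev] at h₁
  have hsum : ‖xp - xq‖ ^ 2 ≤ ρ * ⟪p - q, xp - xq⟫ := by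
    rw [inner_sub_left]
    rw [← neg_sub xp xq, inner_neg_right] at h₂
    linarith
  have hcs := real_inner_le_norm (p - q) (xp - xq)
  rcases (norm_nonneg (xp - xq)).eq_or_lt with h0 | h0
  · rw [← h0]; positivity
  · nlinarith

lemma forall_inner_le_neg_normalize {c w₀ : E} (hmin : ∀ w ∈ S, ⟪c, w₀⟫ ≤ ⟪c, w⟫) :
    ∀ x ∈ S, ⟪-(‖c‖⁻¹ • c), x⟫ ≤ ⟪-(‖c‖⁻¹ • c), w₀⟫ := by
  intro x hx
  simp only [inner_neg_left, real_inner_smul_left, neg_le_neg_iff]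
  exact mul_le_mul_of_nonneg_left (hmin x hx) (inv_nonneg.mpr (norm_nonneg c))

end InnerProductSpace

theorem support_point_directional_stability_general {d : ℕ}
    (S : Set (EuclideanSpace ℝ (Fin d)))
    (ρ : ℝ) (hρ : 0 < ρ) (hsc : StronglyConvexSet ρ S) :
    (∀ p q : EuclideanSpace ℝ (Fin d), ‖p‖ = 1 → ‖q‖ = 1 →
      ∀ xp ∈ S, (∀ x ∈ S, ⟪p, x⟫ ≤ ⟪p, xp⟫) →
      ∀ xq ∈ S, (∀ x ∈ S, ⟪q, x⟫ ≤ ⟪q, xq⟫) →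
      ‖xp - xq‖ ≤ ρ * ‖p - q‖) ∧
    (∀ c₁ c₂ : EuclideanSpace ℝ (Fin d), c₁ ≠ 0 → c₂ ≠ 0 →
      ∀ w₁ ∈ S, (∀ w ∈ S, ⟪c₁, w₁⟫ ≤ ⟪c₁, w⟫) →
      ∀ w₂ ∈ S, (∀ w ∈ S, ⟪c₂, w₂⟫ ≤ ⟪c₂, w⟫) →
      ‖w₁ - w₂‖ ≤ ρ * ‖‖c₁‖⁻¹ • c₁ - ‖c₂‖⁻¹ • c₂‖) := by
  obtain ⟨X, hX⟩ := hsc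
  refine ⟨fun p q hp hq xp hxp hmaxp xq hxq hmaxq =>
    norm_sub_le_mul_norm_sub_of_forall_inner_le hX hρ hp hq hxp hmaxp hxq hmaxq,
    fun c₁ c₂ hc₁ hc₂ w₁ hw₁ hmin₁ w₂ hw₂ hmin₂ => ?_⟩
  have h := norm_sub_le_mul_norm_sub_of_forall_inner_le hX hρ
    (by simp [norm_smul, hc₁]) (by simp [norm_smul, hc₂])
    hw₁ (forall_inner_le_neg_normalize hmin₁) hw₂ (forall_inner_le_neg_normalize hmin₂)
  rwa [neg_sub_neg, norm_sub_rev (‖c₂‖⁻¹ • c₂)] at h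

/-- **Directional stability of support points under strong convexity.**
For a nonempty compact `ρ`-strongly convex set: any maximizers of unit directions `p, q`
are within `ρ ‖p − q‖` of one another; consequently, minimizers of nonzero costs `c₁, c₂`
are within `ρ ‖c₁/‖c₁‖ − c₂/‖c₂‖‖`. -/
theorem support_point_directional_stability {d : ℕ}
    (S : Set (EuclideanSpace ℝ (Fin d)))
    (hne : S.Nonempty) (hcomp : IsCompact S)
    (ρ : ℝ) (hρ : 0 < ρ) (hsc : StronglyConvexSet ρ S) :
    (∀ p q : EuclideanSpace ℝ (Fin d), ‖p‖ = 1 → ‖q‖ = 1 →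
      ∀ xp ∈ S, (∀ x ∈ S, ⟪p, x⟫ ≤ ⟪p, xp⟫) →
      ∀ xq ∈ S, (∀ x ∈ S, ⟪q, x⟫ ≤ ⟪q, xq⟫) →
      ‖xp - xq‖ ≤ ρ * ‖p - q‖) ∧
    (∀ c₁ c₂ : EuclideanSpace ℝ (Fin d), c₁ ≠ 0 → c₂ ≠ 0 →
      ∀ w₁ ∈ S, (∀ w ∈ S, ⟪c₁, w₁⟫ ≤ ⟪c₁, w⟫) →
      ∀ w₂ ∈ S, (∀ w ∈ S, ⟪c₂, w₂⟫ ≤ ⟪c₂, w⟫) →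
      ‖w₁ - w₂‖ ≤ ρ * ‖‖c₁‖⁻¹ • c₁ - ‖c₂‖⁻¹ • c₂‖) :=
  support_point_directional_stability_general S ρ hρ hsc
end

section
/- Quadratic growth from curvature: let S ⊆ ℝ^d be nonempty, compact, and ρ-strongly convex. Fix a unit vector p ∈ ℝ^d and let x_S(p) ∈ S attain max_{x∈S} ⟨p, x⟩. Then for every x ∈ S, ξ_S(p) − ⟨p, x⟩ ≥ ‖x − x_S(p)‖² / (2ρ), where ξ_S(p) = max_{x∈S} ⟨p, x⟩. -/
/-! Let `r = ‖x - x_p‖`. If two points lie in a ball of radius `ρ`, the parallelogram identity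
leaves room of size `t (1 - t) r² / (2ρ)` around their convex combination with weights `t, 1 - t`,
so pushing that combination this far in any unit direction stays inside the ball. Hence
`t x + (1 - t) x_p + t (1 - t) r² / (2ρ) p` lies in every ball containing `S`, hence in `S`, and
comparing its value under `⟪p, ·⟫` with the maximum `⟪p, x_p⟫` gives
`(1 - t) r² / (2ρ) ≤ ⟪p, x_p - x⟫`; let `t → 0`. -/

open scoped RealInnerProductSpace

open Filter Topology Metric

theorem le_of_forall_one_sub_mul_le {a b : ℝ} (h : ∀ t ∈ Set.Ioo (0 : ℝ) 1, (1 - t) * a ≤ b) :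
    a ≤ b := by
  have hlim : Tendsto (fun t : ℝ ↦ (1 - t) * a) (𝓝[>] 0) (𝓝 a) :=
    tendsto_nhdsWithin_of_tendsto_nhds <|
      (by fun_prop : Continuous fun t : ℝ ↦ (1 - t) * a).tendsto' 0 a (by simp)
  exact le_of_tendsto hlim (eventually_of_mem (Ioo_mem_nhdsGT one_pos) h)

section InnerProductSpace

variable {E : Type*} [NormedAddCommGroup E] [InnerProductSpace ℝ E]

theorem norm_smul_add_one_sub_smul_sq (u v : E) (t : ℝ) :
    ‖t • u + (1 - t) • v‖ ^ 2
      = t * ‖u‖ ^ 2 + (1 - t) * ‖v‖ ^ 2 - t * (1 - t) * ‖u - v‖ ^ 2 := by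
  rw [norm_add_sq_real, norm_sub_sq_real, norm_smul, norm_smul, real_inner_smul_left,
    real_inner_smul_right, mul_pow, mul_pow, Real.norm_eq_abs, Real.norm_eq_abs, sq_abs, sq_abs]
  ring

theorem smul_add_one_sub_smul_add_smul_mem_closedBall {c x y p : E} {ρ t : ℝ} (hρ : 0 < ρ)
    (hx : x ∈ closedBall c ρ) (hy : y ∈ closedBall c ρ) (ht₀ : 0 ≤ t) (ht₁ : t ≤ 1)
    (hp : ‖p‖ ≤ 1) :
    t • x + (1 - t) • y + (t * (1 - t) * ‖x - y‖ ^ 2 / (2 * ρ)) • p ∈ closedBall c ρ := by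
  set γ := t * (1 - t) * ‖x - y‖ ^ 2 / (2 * ρ)
  set w := t • (x - c) + (1 - t) • (y - c)
  rw [mem_closedBall_iff_norm] at hx hy ⊢
  have hγ₀ : 0 ≤ γ := by have := sub_nonneg.mpr ht₁; positivity
  have hγ : 2 * ρ * γ = t * (1 - t) * ‖x - y‖ ^ 2 := by unfold γ; field_simp
  have hw_sq : ‖w‖ ^ 2 ≤ ρ ^ 2 - 2 * ρ * γ := by
    have hu : ‖x - c‖ ^ 2 ≤ ρ ^ 2 := pow_le_pow_left₀ (norm_nonneg _) hx 2
    have hv : ‖y - c‖ ^ 2 ≤ ρ ^ 2 := pow_le_pow_left₀ (norm_nonneg _) hy 2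
    rw [norm_smul_add_one_sub_smul_sq, sub_sub_sub_cancel_right, hγ]
    nlinarith
  have hγρ : γ ≤ ρ := by nlinarith [sq_nonneg ‖w‖]
  have hw : ‖w‖ ≤ ρ - γ :=
    (sq_le_sq₀ (norm_nonneg _) (by linarith)).mp (by nlinarith)
  calc ‖t • x + (1 - t) • y + γ • p - c‖ = ‖w + γ • p‖ := by congr 1; module
    _ ≤ ‖w‖ + ‖γ • p‖ := norm_add_le _ _
    _ = ‖w‖ + γ * ‖p‖ := by rw [norm_smul, Real.norm_of_nonneg hγ₀]
    _ ≤ ρ := by nlinarith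

end InnerProductSpace

section EuclideanSpace

variable {d : ℕ}

theorem StronglyConvexSet.smul_add_one_sub_smul_add_smul_mem {S : Set (EuclideanSpace ℝ (Fin d))}
    {ρ t : ℝ} {x y p : EuclideanSpace ℝ (Fin d)} (hS : StronglyConvexSet ρ S) (hρ : 0 < ρ)
    (hx : x ∈ S) (hy : y ∈ S) (ht₀ : 0 ≤ t) (ht₁ : t ≤ 1) (hp : ‖p‖ ≤ 1) :
    t • x + (1 - t) • y + (t * (1 - t) * ‖x - y‖ ^ 2 / (2 * ρ)) • p ∈ S := by
  obtain ⟨X, rfl⟩ := hS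
  simp only [Set.mem_iInter₂] at hx hy ⊢
  exact fun c hc ↦ smul_add_one_sub_smul_add_smul_mem_closedBall hρ (hx c hc) (hy c hc) ht₀ ht₁ hp

theorem supp_eq_inner_of_forall_inner_le {S : Set (EuclideanSpace ℝ (Fin d))}
    {p xp : EuclideanSpace ℝ (Fin d)} (hxp : xp ∈ S) (hmax : ∀ x ∈ S, ⟪p, x⟫ ≤ ⟪p, xp⟫) :
    supp S p = ⟪p, xp⟫ :=
  IsGreatest.csSup_eq ⟨⟨xp, hxp, rfl⟩, by rintro _ ⟨x, hx, rfl⟩; exact hmax x hx⟩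

end EuclideanSpace

theorem quadratic_growth_from_curvature_general {d : ℕ}
    (S : Set (EuclideanSpace ℝ (Fin d)))
    (ρ : ℝ) (hρ : 0 < ρ) (hsc : StronglyConvexSet ρ S)
    (p : EuclideanSpace ℝ (Fin d)) (hp : ‖p‖ = 1)
    (xp : EuclideanSpace ℝ (Fin d)) (hxpmem : xp ∈ S)
    (hxpmax : ∀ x ∈ S, ⟪p, x⟫ ≤ ⟪p, xp⟫)
    (x : EuclideanSpace ℝ (Fin d)) (hx : x ∈ S) :
    ‖x - xp‖ ^ 2 / (2 * ρ) ≤ supp S p - ⟪p, x⟫ := by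
  rw [supp_eq_inner_of_forall_inner_le hxpmem hxpmax]
  have hpp : ⟪p, p⟫ = 1 := by rw [real_inner_self_eq_norm_sq, hp, one_pow]
  refine le_of_forall_one_sub_mul_le fun t ⟨ht₀, ht₁⟩ ↦ ?_
  have hz := hxpmax _ (hsc.smul_add_one_sub_smul_add_smul_mem hρ hx hxpmem ht₀.le ht₁.le hp.le)
  simp only [inner_add_right, real_inner_smul_right, hpp] at hz
  refine le_of_mul_le_mul_left ?_ ht₀
  calc t * ((1 - t) * (‖x - xp‖ ^ 2 / (2 * ρ))) = t * (1 - t) * ‖x - xp‖ ^ 2 / (2 * ρ) := by ring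
    _ ≤ t * (⟪p, xp⟫ - ⟪p, x⟫) := by linarith

/-- **Quadratic growth from curvature.**
For a nonempty compact `ρ`-strongly convex set `S`, a unit direction `p`, and a maximizer
`x_p` of `⟨p, ·⟩` over `S`: for every `x ∈ S`,
`ξ_S(p) − ⟨p, x⟩ ≥ ‖x − x_p‖² / (2ρ)`. -/
theorem quadratic_growth_from_curvature {d : ℕ}
    (S : Set (EuclideanSpace ℝ (Fin d)))
    (hne : S.Nonempty) (hcomp : IsCompact S)
    (ρ : ℝ) (hρ : 0 < ρ) (hsc : StronglyConvexSet ρ S)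
    (p : EuclideanSpace ℝ (Fin d)) (hp : ‖p‖ = 1)
    (xp : EuclideanSpace ℝ (Fin d)) (hxpmem : xp ∈ S)
    (hxpmax : ∀ x ∈ S, ⟪p, x⟫ ≤ ⟪p, xp⟫)
    (x : EuclideanSpace ℝ (Fin d)) (hx : x ∈ S) :
    ‖x - xp‖ ^ 2 / (2 * ρ) ≤ supp S p - ⟪p, x⟫ :=
  quadratic_growth_from_curvature_general S ρ hρ hsc p hp xp hxpmem hxpmax x hx
end

section
/- Bounding linear functionals across two sets under strong convexity: let S_ref, S_cl ⊆ ℝ^d be nonempty compact sets with Hausdorff distance δ = d_H(S_ref, S_cl), with S_ref being ρ_ref-strongly convex and S_cl being ρ_cl-strongly convex, and let ρ_min = min{ρ_ref, ρ_cl}. Let c_ref, c_cl ∈ ℝ^d be nonzero, and let w⋆_ref be the minimizer of ⟨c_ref, ·⟩ over S_ref and w⋆_cl the minimizer of ⟨c_cl, ·⟩ over S_cl. Then for every ĉ ∈ ℝ^d, |⟨ĉ, w⋆_ref − w⋆_cl⟩| ≤ ‖ĉ‖ · Γ, where Γ = ρ_min · ‖c_ref/‖c_ref‖ − c_cl/‖c_cl‖‖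 + δ + 2√(ρ_min · δ). -/
/-!
If `S` is an intersection of balls of radius `ρ` and `w, y ∈ S`, the ball of radius
`t(1-t)‖y - w‖²/(2ρ)` around the point of the chord at parameter `t` still lies in `S`. Moving
from that point against a unit direction `u` minimized at `w` and letting `t → 0` gives the
quadratic growth `‖y - w‖² ≤ 2ρ⟪u, y - w⟫`. Adding the growth inequalities at two minimizers over
one set shows that the minimizer is `ρ`-Lipschitz in the direction. Over two sets at Hausdorff
distance `δ` with a common direction, a point of the first set near the second minimizer is
`2δ`-suboptimal, so growth puts it within `2√(ρδ)` of the first minimizer. The theorem follows by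
passing through the minimizer of the second direction over the set with the smaller radius.
-/

open scoped RealInnerProductSpace

open Metric Filter Topology

section InnerProductSpace

variable {F : Type*} [NormedAddCommGroup F] [InnerProductSpace ℝ F]

theorem norm_smul_add_smul_sq_le {a b : F} {ρ t : ℝ} (ha : ‖a‖ ≤ ρ) (hb : ‖b‖ ≤ ρ)
    (ht₀ : 0 ≤ t) (ht₁ : t ≤ 1) :
    ‖(1 - t) • a + t • b‖ ^ 2 ≤ ρ ^ 2 - t * (1 - t) * ‖b - a‖ ^ 2 := by
  rw [norm_add_sq_real, norm_sub_sq_real, norm_smul, norm_smul, real_inner_smul_left,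
    real_inner_smul_right, Real.norm_of_nonneg ht₀, Real.norm_of_nonneg (sub_nonneg.2 ht₁),
    real_inner_comm]
  have ha2 : ‖a‖ ^ 2 ≤ ρ ^ 2 := pow_le_pow_left₀ (norm_nonneg a) ha 2
  have hb2 : ‖b‖ ^ 2 ≤ ρ ^ 2 := pow_le_pow_left₀ (norm_nonneg b) hb 2
  nlinarith [mul_nonneg (sub_nonneg.2 ht₁) (sub_nonneg.2 ha2), mul_nonneg ht₀ (sub_nonneg.2 hb2)]

theorem closedBall_lineMap_subset_closedBall {x a b : F} {ρ t : ℝ} (hρ : 0 < ρ)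
    (ha : a ∈ closedBall x ρ) (hb : b ∈ closedBall x ρ) (ht₀ : 0 ≤ t) (ht₁ : t ≤ 1) :
    closedBall (AffineMap.lineMap a b t) (t * (1 - t) * dist a b ^ 2 / (2 * ρ)) ⊆
      closedBall x ρ := by
  set r := t * (1 - t) * dist a b ^ 2 / (2 * ρ)
  have hsq := norm_smul_add_smul_sq_le (mem_closedBall_iff_norm.1 ha)
    (mem_closedBall_iff_norm.1 hb) ht₀ ht₁
  rw [show b - x - (a - x) = b - a by abel, ← dist_eq_norm'] at hsq
  have hr : 0 ≤ r := by unfold r; have := sub_nonneg.2 ht₁; positivity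
  -- `(ρ - r) ^ 2 = ρ ^ 2 - 2 ρ r + r ^ 2 ≥ ρ ^ 2 - 2 ρ r`, and `2 ρ r` is the deficit in `hsq`
  have hcenter : dist (AffineMap.lineMap a b t) x ≤ ρ - r := by
    have h2ρr : 2 * ρ * r = t * (1 - t) * dist a b ^ 2 := by unfold r; field_simp
    have hrρ : r ≤ ρ := by nlinarith [sq_nonneg ‖(1 - t) • (a - x) + t • (b - x)‖]
    rw [← sq_le_sq₀ dist_nonneg (by linarith), dist_eq_norm, AffineMap.lineMap_apply_module,
      show (1 - t) • a + t • b - x = (1 - t) • (a - x) + t • (b - x) by module]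
    nlinarith [sq_nonneg r]
  intro z hz
  calc dist z x ≤ dist z (AffineMap.lineMap a b t) + dist (AffineMap.lineMap a b t) x :=
        dist_triangle _ _ _
    _ ≤ r + (ρ - r) := add_le_add (mem_closedBall.1 hz) hcenter
    _ = ρ := by ring

theorem sq_norm_sub_le_inner_of_isMinOn {X S : Set F} {ρ : ℝ} (hρ : 0 < ρ)
    (hS : S = ⋂ x ∈ X, closedBall x ρ) {u w y : F} (hu : ‖u‖ = 1) (hw : w ∈ S)
    (hmin : IsMinOn (⟪u, ·⟫) S w) (hy : y ∈ S) :
    ‖y - w‖ ^ 2 ≤ 2 * ρ * ⟪u, y - w⟫ := by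
  have hbound : ∀ t ∈ Set.Ioc (0 : ℝ) 1, (1 - t) * ‖y - w‖ ^ 2 ≤ 2 * ρ * ⟪u, y - w⟫ := by
    rintro t ⟨ht₀, ht₁⟩
    set r := t * (1 - t) * dist w y ^ 2 / (2 * ρ)
    have hr : 0 ≤ r := by unfold r; have := sub_nonneg.2 ht₁; positivity
    have hmem : AffineMap.lineMap w y t - r • u ∈ S := by
      subst hS
      simp only [Set.mem_iInter₂] at hw hy ⊢
      intro x hx
      apply closedBall_lineMap_subset_closedBall hρ (hw x hx) (hy x hx) ht₀.le ht₁
      rw [mem_closedBall, dist_eq_norm, sub_sub_cancel_left, norm_neg, norm_smul, hu, mul_one,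
        Real.norm_of_nonneg hr]
    have hinner := isMinOn_iff.1 hmin _ hmem
    rw [AffineMap.lineMap_apply_module', inner_sub_right, inner_add_right, real_inner_smul_right,
      real_inner_smul_right, real_inner_self_eq_norm_sq, hu] at hinner
    have h2ρr : 2 * ρ * r = t * ((1 - t) * ‖y - w‖ ^ 2) := by
      unfold r; rw [dist_eq_norm']; field_simp
    refine le_of_mul_le_mul_left ?_ ht₀
    nlinarith
  have hlim : Tendsto (fun t : ℝ => (1 - t) * ‖y - w‖ ^ 2) (𝓝[>] 0) (𝓝 (‖y - w‖ ^ 2)) := by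
    have hcont : Continuous fun t : ℝ => (1 - t) * ‖y - w‖ ^ 2 := by fun_prop
    exact (hcont.tendsto' 0 _ (by simp)).mono_left nhdsWithin_le_nhds
  exact le_of_tendsto hlim (eventually_of_mem (Ioc_mem_nhdsGT one_pos) hbound)

theorem IsMinOn.inner_smul_left {S : Set F} {c w : F} (hmin : IsMinOn (⟪c, ·⟫) S w) {a : ℝ}
    (ha : 0 ≤ a) : IsMinOn (⟪a • c, ·⟫) S w :=
  isMinOn_iff.2 fun z hz => by
    simp only [real_inner_smul_left]
    exact mul_le_mul_of_nonneg_left (isMinOn_iff.1 hmin z hz) ha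

theorem norm_sub_le_mul_norm_sub_of_isMinOn {X S : Set F} {ρ : ℝ} (hρ : 0 < ρ)
    (hS : S = ⋂ x ∈ X, closedBall x ρ) {u₁ u₂ w₁ w₂ : F} (hu₁ : ‖u₁‖ = 1) (hu₂ : ‖u₂‖ = 1)
    (hw₁ : w₁ ∈ S) (hmin₁ : IsMinOn (⟪u₁, ·⟫) S w₁)
    (hw₂ : w₂ ∈ S) (hmin₂ : IsMinOn (⟪u₂, ·⟫) S w₂) :
    ‖w₁ - w₂‖ ≤ ρ * ‖u₁ - u₂‖ := by
  have h₁ := sq_norm_sub_le_inner_of_isMinOn hρ hS hu₁ hw₁ hmin₁ hw₂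
  have h₂ := sq_norm_sub_le_inner_of_isMinOn hρ hS hu₂ hw₂ hmin₂ hw₁
  rw [norm_sub_rev, ← neg_sub w₁ w₂, inner_neg_right] at h₁
  have hcs : ⟪u₂ - u₁, w₁ - w₂⟫ ≤ ‖u₁ - u₂‖ * ‖w₁ - w₂‖ := by
    rw [norm_sub_rev u₁]; exact real_inner_le_norm _ _
  rw [inner_sub_left] at hcs
  have hsq : ‖w₁ - w₂‖ ^ 2 ≤ ρ * ‖u₁ - u₂‖ * ‖w₁ - w₂‖ := by
    nlinarith [mul_le_mul_of_nonneg_left hcs hρ.le]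
  nlinarith [mul_nonneg hρ.le (norm_nonneg (u₁ - u₂))]

theorem norm_sub_le_of_isMinOn_of_forall_exists_dist_le {X S₁ S₂ : Set F} {ρ δ : ℝ} (hρ : 0 < ρ)
    (hS₁ : S₁ = ⋂ x ∈ X, closedBall x ρ) {u w₁ w₂ : F} (hu : ‖u‖ = 1)
    (hw₁ : w₁ ∈ S₁) (hmin₁ : IsMinOn (⟪u, ·⟫) S₁ w₁)
    (hw₂ : w₂ ∈ S₂) (hmin₂ : IsMinOn (⟪u, ·⟫) S₂ w₂)
    (h₁₂ : ∀ p ∈ S₁, ∃ q ∈ S₂, dist p q ≤ δ) (h₂₁ : ∀ p ∈ S₂, ∃ q ∈ S₁, dist p q ≤ δ) :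
    ‖w₁ - w₂‖ ≤ δ + 2 * √(ρ * δ) := by
  obtain ⟨w₁', hw₁', hd₁⟩ := h₁₂ w₁ hw₁
  obtain ⟨w₂', hw₂', hd₂⟩ := h₂₁ w₂ hw₂
  have hδ : 0 ≤ δ := dist_nonneg.trans hd₁
  have hinner : ∀ p q : F, dist p q ≤ δ → ⟪u, q - p⟫ ≤ δ := fun p q h =>
    (real_inner_le_norm _ _).trans (by rwa [hu, one_mul, ← dist_eq_norm'])
  have hgap : ⟪u, w₂' - w₁⟫ ≤ 2 * δ := by
    have hopt := isMinOn_iff.1 hmin₂ _ hw₁'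
    rw [show w₂' - w₁ = (w₂' - w₂) + (w₂ - w₁') + (w₁' - w₁) by abel, inner_add_right,
      inner_add_right, inner_sub_right u w₂]
    linarith [hinner w₂ w₂' hd₂, hinner w₁ w₁' hd₁]
  have hnear : ‖w₂' - w₁‖ ≤ 2 * √(ρ * δ) := by
    have hgrowth := sq_norm_sub_le_inner_of_isMinOn hρ hS₁ hu hw₁ hmin₁ hw₂'
    rw [← sq_le_sq₀ (norm_nonneg _) (by positivity), mul_pow, Real.sq_sqrt (by positivity)]
    nlinarith
  calc ‖w₁ - w₂‖ ≤ ‖w₁ - w₂'‖ + ‖w₂' - w₂‖ := norm_sub_le_norm_sub_add_norm_sub _ _ _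
    _ ≤ 2 * √(ρ * δ) + δ :=
      add_le_add (by rwa [norm_sub_rev]) (by rwa [← dist_eq_norm, dist_comm])
    _ = δ + 2 * √(ρ * δ) := add_comm _ _

theorem IsCompact.exists_dist_le_hausdorffDist {α : Type*} [PseudoMetricSpace α] {s t : Set α}
    (hs : Bornology.IsBounded s) (ht : IsCompact t) (htne : t.Nonempty) {p : α} (hp : p ∈ s) :
    ∃ q ∈ t, dist p q ≤ hausdorffDist s t := by
  obtain ⟨q, hq, hdist⟩ := ht.exists_infDist_eq_dist htne p
  exact ⟨q, hq, hdist ▸ infDist_le_hausdorffDist_of_mem hp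
    (hausdorffEDist_ne_top_of_nonempty_of_bounded ⟨p, hp⟩ htne hs ht.isBounded)⟩

theorem norm_sub_le_of_isMinOn_of_isCompact {X S₁ S₂ : Set F} {ρ : ℝ} (hρ : 0 < ρ)
    (hS₁ : S₁ = ⋂ x ∈ X, closedBall x ρ) (hc₁ : IsCompact S₁) (hc₂ : IsCompact S₂)
    {u₁ u₂ w₁ w₂ : F} (hu₁ : ‖u₁‖ = 1) (hu₂ : ‖u₂‖ = 1)
    (hw₁ : w₁ ∈ S₁) (hmin₁ : IsMinOn (⟪u₁, ·⟫) S₁ w₁)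
    (hw₂ : w₂ ∈ S₂) (hmin₂ : IsMinOn (⟪u₂, ·⟫) S₂ w₂) :
    ‖w₁ - w₂‖ ≤ ρ * ‖u₁ - u₂‖ + hausdorffDist S₁ S₂ + 2 * √(ρ * hausdorffDist S₁ S₂) := by
  obtain ⟨w, hw, hmin⟩ := hc₁.exists_isMinOn (f := (⟪u₂, ·⟫)) ⟨w₁, hw₁⟩
    (continuous_const.inner continuous_id).continuousOn
  have hlip := norm_sub_le_mul_norm_sub_of_isMinOn hρ hS₁ hu₁ hu₂ hw₁ hmin₁ hw hmin
  have hcross := norm_sub_le_of_isMinOn_of_forall_exists_dist_le hρ hS₁ hu₂ hw hmin hw₂ hmin₂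
    (fun _ hp => hc₂.exists_dist_le_hausdorffDist hc₁.isBounded ⟨w₂, hw₂⟩ hp)
    (fun _ hp => hausdorffDist_comm (s := S₁) ▸
      hc₁.exists_dist_le_hausdorffDist hc₂.isBounded ⟨w₁, hw₁⟩ hp)
  calc ‖w₁ - w₂‖ ≤ ‖w₁ - w‖ + ‖w - w₂‖ := norm_sub_le_norm_sub_add_norm_sub _ _ _
    _ ≤ _ := by linarith

end InnerProductSpace

theorem linear_functional_cross_set_bound_strongly_convex_general {d : ℕ}
    (Sref Scl : Set (EuclideanSpace ℝ (Fin d)))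
    (hcompref : IsCompact Sref) (hcompcl : IsCompact Scl)
    (ρref ρcl : ℝ) (hρref : 0 < ρref) (hρcl : 0 < ρcl)
    (hscref : StronglyConvexSet ρref Sref) (hsccl : StronglyConvexSet ρcl Scl)
    (cref ccl : EuclideanSpace ℝ (Fin d)) (hcref : cref ≠ 0) (hccl : ccl ≠ 0)
    (wref : EuclideanSpace ℝ (Fin d)) (hwrefmem : wref ∈ Sref)
    (hwrefmin : ∀ w ∈ Sref, ⟪cref, wref⟫ ≤ ⟪cref, w⟫)
    (wcl : EuclideanSpace ℝ (Fin d)) (hwclmem : wcl ∈ Scl)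
    (hwclmin : ∀ w ∈ Scl, ⟪ccl, wcl⟫ ≤ ⟪ccl, w⟫)
    (chat : EuclideanSpace ℝ (Fin d)) :
    |⟪chat, wref - wcl⟫| ≤
      ‖chat‖ * (min ρref ρcl * ‖‖cref‖⁻¹ • cref - ‖ccl‖⁻¹ • ccl‖ +
        Metric.hausdorffDist Sref Scl +
        2 * Real.sqrt (min ρref ρcl * Metric.hausdorffDist Sref Scl)) := by
  obtain ⟨Xref, hXref⟩ := hscref
  obtain ⟨Xcl, hXcl⟩ := hsccl
  have hminref := (isMinOn_iff.2 hwrefmin).inner_smul_left (inv_nonneg.2 (norm_nonneg cref))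
  have hmincl := (isMinOn_iff.2 hwclmin).inner_smul_left (inv_nonneg.2 (norm_nonneg ccl))
  have huref : ‖‖cref‖⁻¹ • cref‖ = 1 := norm_smul_inv_norm hcref
  have hucl : ‖‖ccl‖⁻¹ • ccl‖ = 1 := norm_smul_inv_norm hccl
  have hdist : ‖wref - wcl‖ ≤ min ρref ρcl * ‖‖cref‖⁻¹ • cref - ‖ccl‖⁻¹ • ccl‖ +
      hausdorffDist Sref Scl + 2 * √(min ρref ρcl * hausdorffDist Sref Scl) := by
    rcases le_total ρref ρcl with hle | hle
    · rw [min_eq_left hle]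
      exact norm_sub_le_of_isMinOn_of_isCompact hρref hXref hcompref hcompcl huref hucl
        hwrefmem hminref hwclmem hmincl
    · rw [min_eq_right hle, norm_sub_rev wref, norm_sub_rev (‖cref‖⁻¹ • cref),
        hausdorffDist_comm]
      exact norm_sub_le_of_isMinOn_of_isCompact hρcl hXcl hcompcl hcompref hucl huref
        hwclmem hmincl hwrefmem hminref
  calc |⟪chat, wref - wcl⟫| ≤ ‖chat‖ * ‖wref - wcl‖ := abs_real_inner_le_norm _ _
    _ ≤ _ := mul_le_mul_of_nonneg_left hdist (norm_nonneg _)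

/-- **Bounding linear functionals across two sets under strong convexity.**
With `δ = d_H(S_ref, S_cl)` and `ρ_min = min{ρ_ref, ρ_cl}`, for nonzero `c_ref, c_cl` and
minimizers `w⋆_ref, w⋆_cl` of the respective costs over the respective sets, every `ĉ`
satisfies `|⟨ĉ, w⋆_ref − w⋆_cl⟩| ≤ ‖ĉ‖ Γ` with
`Γ = ρ_min ‖c_ref/‖c_ref‖ − c_cl/‖c_cl‖‖ + δ + 2√(ρ_min δ)`. -/
theorem linear_functional_cross_set_bound_strongly_convex {d : ℕ}
    (Sref Scl : Set (EuclideanSpace ℝ (Fin d)))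
    (hneref : Sref.Nonempty) (hnecl : Scl.Nonempty)
    (hcompref : IsCompact Sref) (hcompcl : IsCompact Scl)
    (ρref ρcl : ℝ) (hρref : 0 < ρref) (hρcl : 0 < ρcl)
    (hscref : StronglyConvexSet ρref Sref) (hsccl : StronglyConvexSet ρcl Scl)
    (cref ccl : EuclideanSpace ℝ (Fin d)) (hcref : cref ≠ 0) (hccl : ccl ≠ 0)
    (wref : EuclideanSpace ℝ (Fin d)) (hwrefmem : wref ∈ Sref)
    (hwrefmin : ∀ w ∈ Sref, ⟪cref, wref⟫ ≤ ⟪cref, w⟫)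
    (wcl : EuclideanSpace ℝ (Fin d)) (hwclmem : wcl ∈ Scl)
    (hwclmin : ∀ w ∈ Scl, ⟪ccl, wcl⟫ ≤ ⟪ccl, w⟫)
    (chat : EuclideanSpace ℝ (Fin d)) :
    |⟪chat, wref - wcl⟫| ≤
      ‖chat‖ * (min ρref ρcl * ‖‖cref‖⁻¹ • cref - ‖ccl‖⁻¹ • ccl‖ +
        Metric.hausdorffDist Sref Scl +
        2 * Real.sqrt (min ρref ρcl * Metric.hausdorffDist Sref Scl)) :=
  linear_functional_cross_set_bound_strongly_convex_general Sref Scl hcompref hcompcl ρref ρcl hρref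
    hρcl hscref hsccl cref ccl hcref hccl wref hwrefmem hwrefmin wcl hwclmem hwclmin chat
end
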